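/- arXiv:1308.2237 — 2 statements merged into one kernel-verified Lean document; each statement's English description precedes it below -/
import Mathlib

section
/- Let λ ∈ Z^n be weakly decreasing, J ⊆ {1,...,n} with λ - e_J weakly decreasing. Define δ_n(μ) := 1/Π_{l∈Z}[m_l(μ)]! and V_{μ,K} as the product of (1-q^{k-j+1})/(1-q^{k-j}) over pairs j < k with j ∈ K, k ∉ K, μ_j = μ_k. Then δ_n(λ - e_J) · V_{λ-e_J, J} = δ_n(λ) · V_{λ, J^c}. -/
/-!
For weakly decreasing `μ`, equal parts of `μ` occupy consecutive positions. If position `k` is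
preceded by `c` equal parts, it contributes `[c + 1] = ∏_{d=1}^{c} (1 - q^{d+1}) / (1 - q^d)` to
`∏_l [m_l(μ)]!`, so `δ_n(μ)⁻¹` is the product of `(1 - q^{k-j+1}) / (1 - q^{k-j})` over all pairs
`j < k` with `μ_j = μ_k`. Hence `δ_n(μ) V_{μ,K}` is the product of the inverse ratios over those
pairs that are not of the form `j ∈ K`, `k ∉ K`. For `(μ, K) = (λ - e_J, J)` and for
`(μ, K) = (λ, Jᶜ)` these are the same pairs: those with `λ_j = λ_k` and `j`, `k` on the same side
of `J`.
-/

noncomputable def qint (q : ℝ) (m : ℕ) : ℝ := (1 - q ^ m) / (1 - q)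

noncomputable def qfact (q : ℝ) (m : ℕ) : ℝ := ∏ i ∈ Finset.range m, qint q (i + 1)

def mult {n : ℕ} (lam : Fin n → ℤ) (l : ℤ) : ℕ :=
  (Finset.univ.filter fun j => lam j = l).card

/-- `δ_n(λ) = 1 / ∏_l [m_l(λ)]!`. -/
noncomputable def deltaW {n : ℕ} (q : ℝ) (lam : Fin n → ℤ) : ℝ :=
  (∏ l ∈ Finset.univ.image lam, qfact q (mult lam l))⁻¹

/-- `V_{μ,K}`: product over pairs `j < k` with `j ∈ K`, `k ∉ K`, `μ_j = μ_k`. -/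
noncomputable def Vcoef {n : ℕ} (q : ℝ) (lam : Fin n → ℤ) (K : Finset (Fin n)) : ℝ :=
  ∏ j : Fin n, ∏ k : Fin n,
    if j < k ∧ j ∈ K ∧ k ∉ K ∧ lam j = lam k then
      (1 - q ^ ((k : ℕ) - (j : ℕ) + 1)) / (1 - q ^ ((k : ℕ) - (j : ℕ))) else 1

open Finset

noncomputable def qRatio (q : ℝ) (d : ℕ) : ℝ := (1 - q ^ (d + 1)) / (1 - q ^ d)

lemma one_sub_pow_ne_zero {q : ℝ} (hq : ∀ m ≠ 0, q ^ m ≠ 1) {m : ℕ} (hm : m ≠ 0) :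
    1 - q ^ m ≠ 0 :=
  sub_ne_zero.mpr (hq m hm).symm

lemma qRatio_ne_zero {q : ℝ} (hq : ∀ m ≠ 0, q ^ m ≠ 1) {d : ℕ} (hd : d ≠ 0) : qRatio q d ≠ 0 :=
  div_ne_zero (one_sub_pow_ne_zero hq d.succ_ne_zero) (one_sub_pow_ne_zero hq hd)

lemma prod_range_qRatio {q : ℝ} (hq : ∀ m ≠ 0, q ^ m ≠ 1) (c : ℕ) :
    ∏ d ∈ range c, qRatio q (d + 1) = qint q (c + 1) := by
  have h1 : 1 - q ≠ 0 := by simpa using one_sub_pow_ne_zero hq one_ne_zero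
  induction c with
  | zero => simp [qint, h1]
  | succ c ih =>
    have hc := one_sub_pow_ne_zero hq c.succ_ne_zero
    rw [prod_range_succ, ih, qint, qint, qRatio]
    field_simp

lemma prod_card_filter_lt {α M : Type*} [LinearOrder α] [CommMonoid M] (f : ℕ → M)
    (s : Finset α) : ∏ j ∈ s, f #{i ∈ s | i < j} = ∏ i ∈ range #s, f i := by
  induction s using Finset.induction_on_max with
  | empty => simp
  | insert a s ha ih =>
    have ha' : a ∉ s := fun h => lt_irrefl a (ha a h)
    have h_a : {i ∈ insert a s | i < a} = s := by
      rw [filter_insert, if_neg (lt_irrefl a), filter_true_of_mem ha]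
    have h_s : ∀ j ∈ s, {i ∈ insert a s | i < j} = {i ∈ s | i < j} := fun j hj => by
      rw [filter_insert, if_neg (ha j hj).not_gt]
    rw [prod_insert ha', card_insert_of_notMem ha', prod_range_succ, h_a,
      prod_congr rfl fun j hj => by rw [h_s j hj], ih, mul_comm]

lemma prod_qfact_mult {n : ℕ} (q : ℝ) (μ : Fin n → ℤ) :
    ∏ l ∈ univ.image μ, qfact q (mult μ l)
      = ∏ k, qint q (#{j | j < k ∧ μ j = μ k} + 1) := by
  rw [← prod_fiberwise_of_maps_to (g := μ) fun k _ => mem_image_of_mem μ (mem_univ k)]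
  refine prod_congr rfl fun l _ => ?_
  rw [qfact, mult, ← prod_card_filter_lt (fun c => qint q (c + 1))]
  refine prod_congr rfl fun k hk => ?_
  rw [mem_filter] at hk
  congr 3
  ext j
  simp only [mem_filter, mem_univ, true_and, hk.2]
  tauto

lemma prod_qRatio_eq_qint {n : ℕ} {q : ℝ} (hq : ∀ m ≠ 0, q ^ m ≠ 1) {S : Finset (Fin n)}
    {k : Fin n} (hlt : ∀ j ∈ S, j < k) (hIco : ∀ j ∈ S, Ico j k ⊆ S) :
    ∏ j ∈ S, qRatio q ((k : ℕ) - j) = qint q (#S + 1) := by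
  have hinj : Set.InjOn (fun j : Fin n => (k : ℕ) - j - 1) S := by
    intro x hx y hy hxy
    have := hlt x hx
    have := hlt y hy
    simp only at hxy
    omega
  have himage : S.image (fun j : Fin n => (k : ℕ) - j - 1) = range #S := by
    refine eq_of_subset_of_card_le (fun d hd => ?_) (by rw [card_range, card_image_of_injOn hinj])
    obtain ⟨j, hj, rfl⟩ := mem_image.mp hd
    have := card_le_card (hIco j hj)
    have := hlt j hj
    rw [Fin.card_Ico] at *
    rw [mem_range]
    omega
  rw [← prod_range_qRatio hq, ← himage, prod_image hinj]
  refine prod_congr rfl fun j hj => ?_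
  have := hlt j hj
  congr 1
  omega

lemma prod_qfact_mult_eq_prod_qRatio {n : ℕ} {q : ℝ} (hq : ∀ m ≠ 0, q ^ m ≠ 1)
    {μ : Fin n → ℤ} (hμ : Antitone μ) :
    ∏ l ∈ univ.image μ, qfact q (mult μ l)
      = ∏ j, ∏ k, if j < k ∧ μ j = μ k then qRatio q ((k : ℕ) - j) else 1 := by
  rw [prod_qfact_mult, prod_comm]
  refine prod_congr rfl fun k _ => ?_
  rw [← prod_filter, prod_qRatio_eq_qint hq]
  · exact fun j hj => (mem_filter.mp hj).2.1
  · intro j hj i hi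
    obtain ⟨hjk, hμjk⟩ := (mem_filter.mp hj).2
    rw [mem_Ico] at hi
    simp only [mem_filter, mem_univ, true_and]
    exact ⟨hi.2, le_antisymm ((hμ hi.1).trans_eq hμjk) (hμ hi.2.le)⟩

lemma deltaW_mul_Vcoef {n : ℕ} {q : ℝ} (hq : ∀ m ≠ 0, q ^ m ≠ 1) {μ : Fin n → ℤ}
    (hμ : Antitone μ) (K : Finset (Fin n)) :
    deltaW q μ * Vcoef q μ K
      = ∏ j, ∏ k,
          if j < k ∧ μ j = μ k ∧ ¬(j ∈ K ∧ k ∉ K) then (qRatio q ((k : ℕ) - j))⁻¹ else 1 := by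
  have hV : Vcoef q μ K
      = ∏ j, ∏ k, if j < k ∧ j ∈ K ∧ k ∉ K ∧ μ j = μ k then qRatio q ((k : ℕ) - j) else 1 :=
    rfl
  rw [deltaW, prod_qfact_mult_eq_prod_qRatio hq hμ, hV]
  simp only [← prod_inv_distrib, ← prod_mul_distrib]
  refine prod_congr rfl fun j _ => prod_congr rfl fun k _ => ?_
  by_cases hjk : j < k
  · have hR := qRatio_ne_zero hq (show (k : ℕ) - j ≠ 0 by omega)
    by_cases hμjk : μ j = μ k <;> by_cases hjK : j ∈ K <;> by_cases hkK : k ∈ K <;>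
      simp [hjk, hμjk, hjK, hkK, hR]
  · simp [hjk]

theorem delta_V_identity (q : ℝ) (hq : 0 < q) (hq1 : q < 1) (n : ℕ)
    (lam : Fin n → ℤ) (hlam : Antitone lam) (J : Finset (Fin n))
    (hJ : Antitone fun j => lam j - if j ∈ J then 1 else 0) :
    deltaW q (fun j => lam j - if j ∈ J then 1 else 0)
        * Vcoef q (fun j => lam j - if j ∈ J then 1 else 0) J
      = deltaW q lam * Vcoef q lam Jᶜ := by
  have hq' : ∀ m ≠ 0, q ^ m ≠ 1 := fun m hm => (pow_lt_one₀ hq.le hq1 hm).ne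
  rw [deltaW_mul_Vcoef hq' hJ, deltaW_mul_Vcoef hq' hlam]
  refine prod_congr rfl fun j _ => prod_congr rfl fun k _ => if_congr ?_ rfl rfl
  refine and_congr_right fun hjk => ?_
  -- A pair `j ∉ J`, `k ∈ J` would contradict `hlam`, a pair `j ∈ J`, `k ∉ J` would contradict `hJ`.
  have := hlam hjk.le
  have := hJ hjk.le
  by_cases hjJ : j ∈ J <;> by_cases hkJ : k ∈ J <;> simp_all <;> omega
end

section
/- Adjointness of the commuting Hamiltonians: for finitely supported f, g on Λ_n, ⟨H_r f, g⟩_n = ⟨f, H_r^* g⟩_n, where (H_r f)(λ) = Σ_{J: |J|=r, λ-e_J∈Λ_n} V_{λ,J^c} f(λ - e_J) and (H_r^* g)(λ) = Σ_{J: |J|=r, λ+e_J∈Λ_n} V_{λ,J} g(λ + e_J), and the inner product is ⟨f,g⟩_n = Σ_λ f(λ) conj(g(λ)) δ_n(λ) with δ_n(λ) = 1/Π_l[m_l(λ)]!. This follows from the identity δ_n(λ - e_J) V_{λ-e_J,J} = δ_n(λ) V_{λ,J^c} for λ, λ-e_J ∈ Λ_n. -/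
open scoped Classical

/-- `(H_r f)(λ) = Σ_{J : |J| = r, λ - e_J ∈ Λ_n} V_{λ,J^c} f(λ - e_J)`. -/
noncomputable def Hr {n : ℕ} (q : ℝ) (r : ℕ) (f : (Fin n → ℤ) → ℂ) : (Fin n → ℤ) → ℂ :=
  fun lam => ∑ J : Finset (Fin n),
    if J.card = r ∧ Antitone (fun k => lam k - if k ∈ J then 1 else 0) then
      ((Vcoef q lam Jᶜ : ℝ) : ℂ) * f (fun k => lam k - if k ∈ J then 1 else 0)
    else 0

/-- `(H_r^* g)(λ) = Σ_{J : |J| = r, λ + e_J ∈ Λ_n} V_{λ,J} g(λ + e_J)`. -/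
noncomputable def HrStar {n : ℕ} (q : ℝ) (r : ℕ) (g : (Fin n → ℤ) → ℂ) : (Fin n → ℤ) → ℂ :=
  fun lam => ∑ J : Finset (Fin n),
    if J.card = r ∧ Antitone (fun k => lam k + if k ∈ J then 1 else 0) then
      ((Vcoef q lam J : ℝ) : ℂ) * g (fun k => lam k + if k ∈ J then 1 else 0)
    else 0

/-- `⟨f,g⟩_n = Σ_{λ∈Λ_n} f(λ) conj(g(λ)) δ_n(λ)`. -/
noncomputable def ip {n : ℕ} (q : ℝ) (f g : (Fin n → ℤ) → ℂ) : ℂ :=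
  ∑ᶠ lam : Fin n → ℤ,
    if Antitone lam then f lam * (starRingEnd ℂ) (g lam) * ((deltaW q lam : ℝ) : ℂ) else 0

/-!
For weakly decreasing `λ` the indices on a common level form an interval, so telescoping
`[d+1]/[d]` along it turns `δ_n(λ)⁻¹ = Π_l [m_l(λ)]!` into `Π_{j<k, λ_j=λ_k} [k-j+1]/[k-j]`.
Comparing these products for `μ` and `μ + e_J` pair by pair gives
`δ_n(μ + e_J) V_{μ+e_J,J^c} = δ_n(μ) V_{μ,J}`, so after the substitution `λ = μ + e_J` both
`⟨H_r f, g⟩_n` and `⟨f, H_r^* g⟩_n` become `Σ_J Σ_μ f(μ) conj(g(μ + e_J)) δ_n(μ) V_{μ,J}`.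
-/

open Finset

theorem Finset.prod_card_filter_lt_eq_prod_range {ι M : Type*} [LinearOrder ι] [CommMonoid M]
    (s : Finset ι) (F : ℕ → M) : ∏ x ∈ s, F #{y ∈ s | y < x} = ∏ i ∈ range #s, F i := by
  induction s using Finset.induction_on_max with
  | empty => simp
  | insert a s ha ih =>
    have ha' : a ∉ s := fun h => lt_irrefl a (ha a h)
    have hfa : {y ∈ insert a s | y < a} = s := by
      ext y
      simp only [mem_filter, mem_insert]
      constructor
      · rintro ⟨rfl | hy, hya⟩
        · exact absurd hya (lt_irrefl _)
        · exact hy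
      · exact fun hy => ⟨Or.inr hy, ha y hy⟩
    have hfx : ∀ x ∈ s, {y ∈ insert a s | y < x} = {y ∈ s | y < x} := fun x hx => by
      rw [filter_insert, if_neg (lt_asymm (ha x hx))]
    rw [prod_insert ha', card_insert_of_notMem ha', prod_range_succ, hfa, ← ih,
      prod_congr rfl fun x hx => by rw [hfx x hx], mul_comm]

theorem Finset.prod_card_filter_gt_eq_prod_range {ι M : Type*} [LinearOrder ι] [CommMonoid M]
    (s : Finset ι) (F : ℕ → M) : ∏ x ∈ s, F #{y ∈ s | x < y} = ∏ i ∈ range #s, F i :=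
  prod_card_filter_lt_eq_prod_range (ι := ιᵒᵈ) s F

theorem Finset.prod_image_prod_range_card_fiber {ι β M : Type*} [Fintype ι] [LinearOrder ι]
    [DecidableEq β] [CommMonoid M] (f : ι → β) (F : ℕ → M) :
    ∏ b ∈ univ.image f, ∏ i ∈ range #{x | f x = b}, F i = ∏ x, F #{y | x < y ∧ f x = f y} := by
  rw [← prod_fiberwise_of_maps_to (t := univ.image f) (g := f)
    (fun x _ => mem_image_of_mem f (mem_univ x))]
  refine prod_congr rfl fun b _ => ?_
  rw [← prod_card_filter_gt_eq_prod_range]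
  refine prod_congr rfl fun x hx => ?_
  rw [(mem_filter.1 hx).2, filter_filter]
  congr 2
  ext y
  simp [and_comm, eq_comm]

theorem finsum_sum_comp_sub {ι A M : Type*} [Fintype ι] [AddGroup A] [AddCommMonoid M]
    (G : ι → A → M) (s : ι → A) (hG : ∀ i, (Function.support (G i)).Finite) :
    ∑ᶠ a, ∑ i, G i (a - s i) = ∑ᶠ a, ∑ i, G i a := by
  have hG' : ∀ i, (Function.support fun a => G i (a - s i)).Finite := fun i =>
    (hG i).preimage sub_left_injective.injOn
  rw [finsum_sum_comm _ (fun a i => G i (a - s i)) (fun i _ => hG' i),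
    finsum_sum_comm _ (fun a i => G i a) (fun i _ => hG i)]
  exact sum_congr rfl fun i _ => finsum_comp_equiv (Equiv.subRight (s i))

noncomputable def qratio (q : ℝ) (d : ℕ) : ℝ := (1 - q ^ (d + 1)) / (1 - q ^ d)

lemma prod_range_qratio {q : ℝ} (hq : ∀ m ≠ 0, q ^ m ≠ 1) (c : ℕ) :
    ∏ i ∈ range c, qratio q (i + 1) = qint q (c + 1) := by
  induction c with
  | zero =>
    rw [prod_range_zero, qint, zero_add, pow_one,
      div_self (sub_ne_zero.2 (pow_one q ▸ hq 1 one_ne_zero).symm)]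
  | succ c ih =>
    have hc : 1 - q ^ (c + 1) ≠ 0 := sub_ne_zero.2 (hq _ c.succ_ne_zero).symm
    rw [prod_range_succ, ih, qint, qint, qratio, mul_comm, div_mul_div_cancel₀ hc]

section Hamiltonians

variable {n : ℕ}

lemma Vcoef_eq_prod_qratio (q : ℝ) (lam : Fin n → ℤ) (K : Finset (Fin n)) :
    Vcoef q lam K
      = ∏ j, ∏ k, if j < k ∧ j ∈ K ∧ k ∉ K ∧ lam j = lam k then qratio q (k - j) else 1 :=
  rfl

lemma prod_ite_qratio_eq_qint {q : ℝ} (hq : ∀ m ≠ 0, q ^ m ≠ 1) {lam : Fin n → ℤ}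
    (hlam : Antitone lam) (j : Fin n) :
    ∏ k, (if j < k ∧ lam j = lam k then qratio q (k - j) else 1)
      = qint q (#{k | j < k ∧ lam j = lam k} + 1) := by
  set T : Finset (Fin n) := {k | j < k ∧ lam j = lam k}
  have hT : ∀ k ∈ T, {k' ∈ T | k' < k} = Ioo j k := fun k hk => by
    obtain ⟨-, hk⟩ := (mem_filter.1 hk).2
    ext k'
    simp only [T, mem_filter, mem_univ, true_and, mem_Ioo]
    refine ⟨fun h => ⟨h.1.1, h.2⟩, fun h => ⟨⟨h.1, le_antisymm ?_ (hlam h.1.le)⟩, h.2⟩⟩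
    exact hk ▸ hlam h.2.le
  -- `k ∈ T` has exactly `k - j - 1` predecessors in `T`, so the product telescopes
  rw [← prod_filter, ← prod_range_qratio hq, ← prod_card_filter_lt_eq_prod_range]
  refine prod_congr rfl fun k hk => ?_
  have hjk : j < k := (mem_filter.1 hk).2.1
  rw [hT k hk, Fin.card_Ioo]
  congr 1
  omega

noncomputable def sameLevelProd (q : ℝ) (lam : Fin n → ℤ) : ℝ :=
  ∏ j, ∏ k, if j < k ∧ lam j = lam k then qratio q (k - j) else 1

lemma prod_qfact_mult_eq_sameLevelProd {q : ℝ} (hq : ∀ m ≠ 0, q ^ m ≠ 1) {lam : Fin n → ℤ}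
    (hlam : Antitone lam) : ∏ l ∈ univ.image lam, qfact q (mult lam l) = sameLevelProd q lam := by
  simp only [sameLevelProd, prod_ite_qratio_eq_qint hq hlam]
  exact prod_image_prod_range_card_fiber lam (fun i => qint q (i + 1))

lemma deltaW_eq_inv_sameLevelProd {q : ℝ} (hq : ∀ m ≠ 0, q ^ m ≠ 1) {lam : Fin n → ℤ}
    (hlam : Antitone lam) : deltaW q lam = (sameLevelProd q lam)⁻¹ := by
  rw [deltaW, prod_qfact_mult_eq_sameLevelProd hq hlam]

lemma sameLevelProd_ne_zero {q : ℝ} (hq : ∀ m ≠ 0, q ^ m ≠ 1) (lam : Fin n → ℤ) :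
    sameLevelProd q lam ≠ 0 := by
  refine prod_ne_zero_iff.2 fun j _ => prod_ne_zero_iff.2 fun k _ => ?_
  split_ifs with h
  · have hjk : (j : ℕ) < k := h.1
    exact div_ne_zero (sub_ne_zero.2 (hq _ (by omega)).symm)
      (sub_ne_zero.2 (hq _ (by omega)).symm)
  · exact one_ne_zero

/-- The vector `e_J`. -/
def indicatorVec (J : Finset (Fin n)) : Fin n → ℤ := fun k => if k ∈ J then 1 else 0

lemma sameLevelProd_mul_Vcoef_compl (q : ℝ) {lam : Fin n → ℤ} {J : Finset (Fin n)}
    (hlam : Antitone lam) (hlam' : Antitone (lam + indicatorVec J)) :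
    sameLevelProd q lam * Vcoef q (lam + indicatorVec J) Jᶜ
      = sameLevelProd q (lam + indicatorVec J) * Vcoef q lam J := by
  simp only [sameLevelProd, Vcoef_eq_prod_qratio, ← prod_mul_distrib]
  refine prod_congr rfl fun j _ => prod_congr rfl fun k _ => ?_
  by_cases hjk : j < k
  · have h := hlam hjk.le
    have h' := hlam' hjk.le
    by_cases hj : j ∈ J <;> by_cases hk : k ∈ J <;>
      simp only [Pi.add_apply, indicatorVec, hj, hk, hjk, ↓reduceIte, add_zero, mem_compl, true_and,
        not_true_eq_false, not_false_eq_true, false_and, and_false, and_self, mul_one, one_mul,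
        mul_ite, ite_mul] at h' ⊢ <;> split_ifs <;> first | rfl | omega
  · simp [hjk]

lemma deltaW_mul_Vcoef_compl {q : ℝ} (hq : ∀ m ≠ 0, q ^ m ≠ 1) {lam : Fin n → ℤ}
    {J : Finset (Fin n)} (hlam : Antitone lam) (hlam' : Antitone (lam + indicatorVec J)) :
    deltaW q (lam + indicatorVec J) * Vcoef q (lam + indicatorVec J) Jᶜ
      = deltaW q lam * Vcoef q lam J := by
  have h := sameLevelProd_mul_Vcoef_compl q hlam hlam'
  rw [deltaW_eq_inv_sameLevelProd hq hlam, deltaW_eq_inv_sameLevelProd hq hlam']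
  field_simp [sameLevelProd_ne_zero hq]
  linear_combination h

lemma Hr_apply (q : ℝ) (r : ℕ) (f : (Fin n → ℤ) → ℂ) (lam : Fin n → ℤ) :
    Hr q r f lam = ∑ J, if J.card = r ∧ Antitone (lam - indicatorVec J) then
      ((Vcoef q lam Jᶜ : ℝ) : ℂ) * f (lam - indicatorVec J) else 0 :=
  rfl

lemma HrStar_apply (q : ℝ) (r : ℕ) (g : (Fin n → ℤ) → ℂ) (mu : Fin n → ℤ) :
    HrStar q r g mu = ∑ J, if J.card = r ∧ Antitone (mu + indicatorVec J) then
      ((Vcoef q mu J : ℝ) : ℂ) * g (mu + indicatorVec J) else 0 :=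
  rfl

noncomputable def hamPairing (q : ℝ) (r : ℕ) (f g : (Fin n → ℤ) → ℂ) (J : Finset (Fin n))
    (mu : Fin n → ℤ) : ℂ :=
  if J.card = r ∧ Antitone mu ∧ Antitone (mu + indicatorVec J) then
    f mu * starRingEnd ℂ (g (mu + indicatorVec J)) * ((deltaW q mu * Vcoef q mu J : ℝ) : ℂ)
  else 0

lemma support_hamPairing_finite (q : ℝ) (r : ℕ) (f : (Fin n → ℤ) → ℂ) {g : (Fin n → ℤ) → ℂ}
    (hg : (Function.support g).Finite) (J : Finset (Fin n)) :
    (Function.support (hamPairing q r f g J)).Finite := by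
  refine (hg.preimage (add_left_injective (indicatorVec J)).injOn).subset fun mu hmu => ?_
  contrapose! hmu
  simp [hamPairing, Function.notMem_support.1 hmu]

lemma Hr_mul_deltaW_eq_sum_hamPairing {q : ℝ} (hq : ∀ m ≠ 0, q ^ m ≠ 1) (r : ℕ)
    (f g : (Fin n → ℤ) → ℂ) (lam : Fin n → ℤ) :
    (if Antitone lam then Hr q r f lam * starRingEnd ℂ (g lam) * ((deltaW q lam : ℝ) : ℂ) else 0)
      = ∑ J, hamPairing q r f g J (lam - indicatorVec J) := by
  split_ifs with hlam
  · simp only [Hr_apply, sum_mul]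
    refine sum_congr rfl fun J _ => ?_
    simp only [hamPairing, sub_add_cancel, hlam, and_true]
    split_ifs with hJ
    · rw [← deltaW_mul_Vcoef_compl hq hJ.2 (by rwa [sub_add_cancel]), sub_add_cancel]
      push_cast
      ring
    · simp
  · exact (sum_eq_zero fun J _ => by simp [hamPairing, hlam]).symm

lemma mul_HrStar_mul_deltaW_eq_sum_hamPairing (q : ℝ) (r : ℕ) (f g : (Fin n → ℤ) → ℂ)
    (mu : Fin n → ℤ) :
    (if Antitone mu then f mu * starRingEnd ℂ (HrStar q r g mu) * ((deltaW q mu : ℝ) : ℂ) else 0)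
      = ∑ J, hamPairing q r f g J mu := by
  split_ifs with hmu
  · simp only [HrStar_apply, map_sum, mul_sum, sum_mul]
    refine sum_congr rfl fun J _ => ?_
    simp only [hamPairing, hmu, true_and]
    split_ifs
    · rw [map_mul, Complex.conj_ofReal]
      push_cast
      ring
    · simp
  · exact (sum_eq_zero fun J _ => by simp [hamPairing, hmu]).symm

end Hamiltonians

theorem Hr_HrStar_adjoint_general (q : ℝ) (hq : 0 < q) (hq1 : q < 1) (n r : ℕ)
    (f g : (Fin n → ℤ) → ℂ) (hg : (Function.support g).Finite) :
    ip q (Hr q r f) g = ip q f (HrStar q r g) := by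
  have hq' : ∀ m ≠ 0, q ^ m ≠ 1 := fun m hm => (pow_lt_one₀ hq.le hq1 hm).ne
  rw [ip, ip, finsum_congr (Hr_mul_deltaW_eq_sum_hamPairing hq' r f g),
    finsum_congr (mul_HrStar_mul_deltaW_eq_sum_hamPairing q r f g)]
  exact finsum_sum_comp_sub _ _ (support_hamPairing_finite q r f hg)

theorem Hr_HrStar_adjoint (q : ℝ) (hq : 0 < q) (hq1 : q < 1) (n r : ℕ)
    (hr : 1 ≤ r) (hrn : r ≤ n) (f g : (Fin n → ℤ) → ℂ)
    (hf : (Function.support f).Finite) (hg : (Function.support g).Finite) :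
    ip q (Hr q r f) g = ip q f (HrStar q r g) :=
  Hr_HrStar_adjoint_general q hq hq1 n r f g hg
end
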